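/- With g as defined and F₂ > F̄ (persistence equilibrium), any differentiable solution F(t) ≥ 0 of F' = g(F, M_s(t)) - δ_F F with M_s(t) ≥ 0 satisfies: if F(0) ≤ F₂ then F(t) ≤ F₂ for all t ≥ 0 (i.e., [0, F₂] is positively invariant for F), and if F(0) > F₂ then F(t) ≤ F(0)e^{-σt} as long as F(t) ≥ F₂, with σ := δ_F - νβ_Eν_E/α(F₂) > 0. -/

import Mathlib

/-!
Dropping the `M_s` term from the denominator of `g` gives
`g(F, M_s) ≤ νβ_Eν_E F / α(F) ≤ νβ_Eν_E F / α(F₂)` for `F ≥ F₂`, so `F' ≤ -σF` there; and `σ > 0`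
is exactly `F₂ > F̄`, because `δ_F α(F) - νβ_Eν_E = (δ_Fβ_E/k)(F - F̄)`. Hence `F' < 0` on the
level `F = F₂`, which therefore cannot be crossed upwards, and Grönwall's inequality gives the
exponential decay as long as `F ≥ F₂`.
-/

open Set Real

noncomputable def gfun (bE nE dE dM gs k nu : ℝ) (F Ms : ℝ) : ℝ :=
  if 0 < F then
    nu * (1 - nu) * bE ^ 2 * nE ^ 2 * F ^ 2 /
      ((bE * F / k + nE + dE) *
        ((1 - nu) * nE * bE * F + (bE * F / k + nE + dE) * dM * gs * Ms))
  else 0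

theorem le_const_of_deriv_neg_of_eq {f : ℝ → ℝ} {c : ℝ} (hf : Differentiable ℝ f)
    (h0 : f 0 ≤ c) (hc : ∀ t, 0 ≤ t → f t = c → deriv f t < 0) :
    ∀ t, 0 ≤ t → f t ≤ c := fun _ ht =>
  image_le_of_deriv_right_lt_deriv_boundary (B := fun _ => c) (B' := fun _ => 0)
    hf.continuous.continuousOn (fun x _ => (hf x).hasDerivAt.hasDerivWithinAt) h0
    (fun _ => hasDerivAt_const _ _) (fun x hx => hc x hx.1) ⟨ht, le_rfl⟩

theorem le_mul_exp_of_deriv_le_mul {f : ℝ → ℝ} {K T : ℝ} (hf : Differentiable ℝ f)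
    (hT : 0 ≤ T) (h : ∀ t ∈ Ico 0 T, deriv f t ≤ K * f t) : f T ≤ f 0 * exp (K * T) := by
  have := le_gronwallBound_of_liminf_deriv_right_le (ε := 0) hf.continuous.continuousOn
    (fun x _ _ hr => (hf x).hasDerivAt.hasDerivWithinAt.liminf_right_slope_le hr) le_rfl
    (fun x hx => by simpa using h x hx) T ⟨hT, le_rfl⟩
  simpa [gronwallBound_ε0] using this

noncomputable def alpha (bE nE dE k F : ℝ) : ℝ := bE * F / k + nE + dE

noncomputable def reproductionNumber (bE nE dE dF nu : ℝ) : ℝ := nu * bE * nE / (dF * (nE + dE))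

noncomputable def persistenceEquilibrium (bE nE dE dF k nu : ℝ) : ℝ :=
  nu * nE * k / dF * (1 - 1 / reproductionNumber bE nE dE dF nu)

noncomputable def decayRate (bE nE dE dF k nu F2 : ℝ) : ℝ :=
  dF - nu * bE * nE / alpha bE nE dE k F2

section Model

variable {bE nE dE dM dF gs k nu : ℝ}

theorem alpha_pos (hbE : 0 ≤ bE) (hnE : 0 < nE) (hdE : 0 ≤ dE) (hk : 0 ≤ k) {F : ℝ}
    (hF : 0 ≤ F) : 0 < alpha bE nE dE k F := by
  unfold alpha; positivity

theorem alpha_mono (hbE : 0 ≤ bE) (hk : 0 ≤ k) : Monotone (alpha bE nE dE k) := fun _ _ h => by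
  unfold alpha; gcongr

theorem persistenceEquilibrium_pos (hnE : 0 < nE) (hdF : 0 < dF) (hk : 0 < k) (hnu : 0 < nu)
    (hR0 : 1 < reproductionNumber bE nE dE dF nu) :
    0 < persistenceEquilibrium bE nE dE dF k nu := by
  have : 1 / reproductionNumber bE nE dE dF nu < 1 := (div_lt_one (by linarith)).2 hR0
  unfold persistenceEquilibrium
  have : 0 < nu * nE * k / dF := by positivity
  nlinarith

theorem mul_alpha_sub_eq (hbE : 0 < bE) (hnE : 0 < nE) (hdF : 0 < dF) (hk : 0 < k)
    (hnu : 0 < nu) (F : ℝ) :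
    dF * alpha bE nE dE k F - nu * bE * nE =
      dF * bE / k * (F - persistenceEquilibrium bE nE dE dF k nu) := by
  unfold alpha persistenceEquilibrium reproductionNumber
  field_simp
  ring

theorem decayRate_pos (hbE : 0 < bE) (hnE : 0 < nE) (hdE : 0 ≤ dE) (hdF : 0 < dF) (hk : 0 < k)
    (hnu : 0 < nu) {F2 : ℝ} (hF2 : 0 ≤ F2)
    (hF2bar : persistenceEquilibrium bE nE dE dF k nu < F2) :
    0 < decayRate bE nE dE dF k nu F2 := by
  have hα := alpha_pos hbE.le hnE hdE hk.le hF2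
  have := mul_alpha_sub_eq (dE := dE) hbE hnE hdF hk hnu F2
  rw [decayRate, sub_pos, div_lt_iff₀ hα]
  nlinarith [mul_pos (show 0 < dF * bE / k by positivity) (sub_pos.2 hF2bar)]

theorem gfun_le (hbE : 0 < bE) (hnE : 0 < nE) (hdE : 0 ≤ dE) (hdM : 0 ≤ dM) (hgs : 0 ≤ gs)
    (hk : 0 ≤ k) (hnu0 : 0 ≤ nu) (hnu1 : nu < 1) {F Ms : ℝ} (hF : 0 < F) (hMs : 0 ≤ Ms) :
    gfun bE nE dE dM gs k nu F Ms ≤ nu * bE * nE / alpha bE nE dE k F * F := by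
  have hα := alpha_pos hbE.le hnE hdE hk hF.le
  have hν : 0 < 1 - nu := by linarith
  rw [gfun, if_pos hF]
  change _ / (alpha bE nE dE k F *
    ((1 - nu) * nE * bE * F + alpha bE nE dE k F * dM * gs * Ms)) ≤ _
  calc _ ≤ nu * (1 - nu) * bE ^ 2 * nE ^ 2 * F ^ 2 /
          (alpha bE nE dE k F * ((1 - nu) * nE * bE * F)) := by
        gcongr
        exact le_add_of_nonneg_right (by positivity)
    _ = nu * bE * nE / alpha bE nE dE k F * F := by
        field_simp

theorem gfun_sub_le_neg_mul (hbE : 0 < bE) (hnE : 0 < nE) (hdE : 0 ≤ dE) (hdM : 0 ≤ dM)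
    (hgs : 0 ≤ gs) (hk : 0 ≤ k) (hnu0 : 0 ≤ nu) (hnu1 : nu < 1) {F2 F Ms : ℝ} (hF2 : 0 < F2)
    (hF : F2 ≤ F) (hMs : 0 ≤ Ms) :
    gfun bE nE dE dM gs k nu F Ms - dF * F ≤ -decayRate bE nE dE dF k nu F2 * F := by
  have hFpos := hF2.trans_le hF
  have hα2 := alpha_pos hbE.le hnE hdE hk hF2.le
  have : nu * bE * nE / alpha bE nE dE k F ≤ nu * bE * nE / alpha bE nE dE k F2 := by
    gcongr
    exact alpha_mono hbE.le hk hF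
  rw [decayRate]
  nlinarith [gfun_le hbE hnE hdE hdM hgs hk hnu0 hnu1 hFpos hMs]

end Model

theorem stmt_18_general (bE nE dE dM dF gs k nu F2 : ℝ)
    (hbE : 0 < bE) (hnE : 0 < nE) (hdE : 0 < dE) (hdM : 0 < dM)
    (hdF : 0 < dF) (hgs : 0 < gs) (hk : 0 < k) (hnu : nu ∈ Set.Ioo (0:ℝ) 1)
    (hR0 : 1 < nu * bE * nE / (dF * (nE + dE)))
    (hF2 : nu * nE * k / dF * (1 - 1 / (nu * bE * nE / (dF * (nE + dE)))) < F2)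
    (F Ms : ℝ → ℝ)
    (hFdiff : Differentiable ℝ F)
    (hMspos : ∀ t : ℝ, 0 ≤ t → 0 ≤ Ms t)
    (hode : ∀ t : ℝ, 0 ≤ t →
      deriv F t = gfun bE nE dE dM gs k nu (F t) (Ms t) - dF * F t) :
    0 < dF - nu * bE * nE / (bE * F2 / k + nE + dE) ∧
    (F 0 ≤ F2 → ∀ t : ℝ, 0 ≤ t → F t ≤ F2) ∧
    (F2 < F 0 → ∀ t : ℝ, 0 ≤ t → (∀ s ∈ Set.Icc (0:ℝ) t, F2 ≤ F s) →
      F t ≤ F 0 * Real.exp (-(dF - nu * bE * nE / (bE * F2 / k + nE + dE)) * t)) := by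
  obtain ⟨hnu0, hnu1⟩ := hnu
  have hF2pos : 0 < F2 := (persistenceEquilibrium_pos hnE hdF hk hnu0 hR0).trans hF2
  have hσ : 0 < decayRate bE nE dE dF k nu F2 :=
    decayRate_pos hbE hnE hdE.le hdF hk hnu0 hF2pos.le hF2
  have hdecay : ∀ t, 0 ≤ t → F2 ≤ F t →
      deriv F t ≤ -decayRate bE nE dE dF k nu F2 * F t := fun t ht hFt =>
    (hode t ht).trans_le <| gfun_sub_le_neg_mul hbE hnE hdE.le hdM.le hgs.le hk.le hnu0.le hnu1
      hF2pos hFt (hMspos t ht)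
  refine ⟨hσ, fun h0 => le_const_of_deriv_neg_of_eq hFdiff h0 fun t ht hFt => ?_,
    fun _ t ht hle => le_mul_exp_of_deriv_le_mul hFdiff ht fun s hs =>
      hdecay s hs.1 (hle s (Ico_subset_Icc_self hs))⟩
  calc deriv F t ≤ -decayRate bE nE dE dF k nu F2 * F t := hdecay t ht hFt.ge
    _ < 0 := by rw [hFt]; exact mul_neg_of_neg_of_pos (neg_neg_of_pos hσ) hF2pos

theorem stmt_18 (bE nE dE dM dF gs k nu F2 : ℝ)
    (hbE : 0 < bE) (hnE : 0 < nE) (hdE : 0 < dE) (hdM : 0 < dM)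
    (hdF : 0 < dF) (hgs : 0 < gs) (hk : 0 < k) (hnu : nu ∈ Set.Ioo (0:ℝ) 1)
    (hR0 : 1 < nu * bE * nE / (dF * (nE + dE)))
    (hF2 : nu * nE * k / dF * (1 - 1 / (nu * bE * nE / (dF * (nE + dE)))) < F2)
    (F Ms : ℝ → ℝ)
    (hFdiff : Differentiable ℝ F)
    (hFpos : ∀ t : ℝ, 0 ≤ t → 0 ≤ F t)
    (hMspos : ∀ t : ℝ, 0 ≤ t → 0 ≤ Ms t)
    (hode : ∀ t : ℝ, 0 ≤ t →
      deriv F t = gfun bE nE dE dM gs k nu (F t) (Ms t) - dF * F t) :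
    0 < dF - nu * bE * nE / (bE * F2 / k + nE + dE) ∧
    (F 0 ≤ F2 → ∀ t : ℝ, 0 ≤ t → F t ≤ F2) ∧
    (F2 < F 0 → ∀ t : ℝ, 0 ≤ t → (∀ s ∈ Set.Icc (0:ℝ) t, F2 ≤ F s) →
      F t ≤ F 0 * Real.exp (-(dF - nu * bE * nE / (bE * F2 / k + nE + dE)) * t)) :=
  stmt_18_general bE nE dE dM dF gs k nu F2 hbE hnE hdE hdM hdF hgs hk hnu hR0 hF2 F Ms hFdiff
    hMspos hode
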